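/- arXiv:1301.6309 — 7 statements merged into one kernel-verified Lean document; each statement's English description precedes it below -/
import Mathlib

section
/- Let A be a finite multiset in ℤ_p and let A_1,…,A_k be a Liouville partition of A. Let B_1,…,B_k be finite multisets in ℤ_p such that B_g is weakly equivalent to A_g for g = 1,…,k. Then B_1,…,B_k form a Liouville partition of their multiset union B; in particular, B_1,…,B_k are pairwise disjoint. -/
open Filter

/-- `padicDist p m a` is `d_m(a) = min {|h| : h ∈ ℤ, a ≡ h (mod p^m ℤ_p)}`. -/
noncomputable def padicDist (p : ℕ) [Fact p.Prime] (m : ℕ) (a : ℤ_[p]) : ℕ :=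
  sInf {k : ℕ | ∃ h : ℤ, h.natAbs = k ∧ (p : ℤ_[p]) ^ m ∣ a - (h : ℤ_[p])}

/-- `a ∈ ℤ_p` is a p-adic Liouville number if `a ∉ ℤ` and
`liminf_{m→∞} d_m(a)/m < +∞`. -/
def IsPadicLiouville (p : ℕ) [Fact p.Prime] (a : ℤ_[p]) : Prop :=
  (∀ n : ℤ, a ≠ (n : ℤ_[p])) ∧
    liminf (fun m : ℕ => (((padicDist p m a : ℝ) / (m : ℝ)) : EReal)) atTop < (⊤ : EReal)

/-- Two finite multisets in `ℤ_p` are weakly equivalent: there exist orderings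
`a_1,…,a_n`, `b_1,…,b_n`, a constant `c > 0`, and for each `m ≥ 1` a permutation `σ_m`
with `d_m(a_{σ_m i} - b_i) ≤ c m`. -/
def WeaklyEquivalent (p : ℕ) [Fact p.Prime] (A B : Multiset ℤ_[p]) : Prop :=
  ∃ (n : ℕ) (a b : Fin n → ℤ_[p]) (c : ℝ),
    A = ↑(List.ofFn a) ∧ B = ↑(List.ofFn b) ∧ 0 < c ∧
    ∀ m : ℕ, 1 ≤ m → ∃ σ : Equiv.Perm (Fin n),
      ∀ i, (padicDist p m (a (σ i) - b i) : ℝ) ≤ c * m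

/-- Two finite multisets in `ℤ_p` are equivalent: there exist orderings with
`a_i - b_i ∈ ℤ` for all `i`. -/
def EquivalentMultisets (p : ℕ) [Fact p.Prime] (A B : Multiset ℤ_[p]) : Prop :=
  ∃ (n : ℕ) (a b : Fin n → ℤ_[p]),
    A = ↑(List.ofFn a) ∧ B = ↑(List.ofFn b) ∧
    ∀ i, ∃ k : ℤ, a i - b i = (k : ℤ_[p])

/-- `P 0, …, P (k-1)` form a Liouville partition of `A`: their multiset union is `A` and
no two elements of distinct parts differ by an integer or a p-adic Liouville number. -/
def IsLiouvillePartition (p : ℕ) [Fact p.Prime] (A : Multiset ℤ_[p]) {k : ℕ}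
    (P : Fin k → Multiset ℤ_[p]) : Prop :=
  (∑ g, P g) = A ∧
    ∀ g h : Fin k, g ≠ h → ∀ x ∈ P g, ∀ y ∈ P h,
      ¬ ((∃ n : ℤ, x - y = (n : ℤ_[p])) ∨ IsPadicLiouville p (x - y))

/-- A multiset is p-adic non-Liouville if it contains no p-adic Liouville number. -/
def PadicNonLiouvilleMultiset (p : ℕ) [Fact p.Prime] (A : Multiset ℤ_[p]) : Prop :=
  ∀ a ∈ A, ¬ IsPadicLiouville p a

/-- The difference multiset `A - A = {a - a' : a, a' ∈ A}`. -/
noncomputable def diffMultiset (p : ℕ) [Fact p.Prime] (A : Multiset ℤ_[p]) : Multiset ℤ_[p] :=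
  A.bind fun x => A.map fun y => x - y

/-!
The quantity `d_m` is invariant under negation and subadditive, so
`d_m(a - a') ≤ d_m(a - x) + d_m(x - y) + d_m(y - a')`. Being an integer or a p-adic Liouville
number means exactly that `d_m ≤ C m` for infinitely many `m`. If `x ∈ B_g` and `y ∈ B_h`
differed by such a number, then weak equivalence provides, for every `m`, elements `a ∈ A_g`,
`a' ∈ A_h` within `c m` of `x` and `y`; by pigeonhole one pair `(a, a')` serves infinitely
many of the good `m`, and then `a - a'` is an integer or Liouville, contradicting the
partition property of the `A_g`.
-/

section

variable {p : ℕ} [Fact p.Prime]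

lemma padicDist_le_natAbs {m : ℕ} {a : ℤ_[p]} {h : ℤ} (hd : (p : ℤ_[p]) ^ m ∣ a - h) :
    padicDist p m a ≤ h.natAbs :=
  Nat.sInf_le ⟨h, rfl, hd⟩

lemma exists_padicDist_eq (m : ℕ) (a : ℤ_[p]) :
    ∃ h : ℤ, h.natAbs = padicDist p m a ∧ (p : ℤ_[p]) ^ m ∣ a - h := by
  have hd : (p : ℤ_[p]) ^ m ∣ a - (a.appr m : ℤ) := by
    simpa [Ideal.mem_span_singleton] using PadicInt.appr_spec m a
  exact Nat.sInf_mem (s := {k | ∃ h : ℤ, h.natAbs = k ∧ (p : ℤ_[p]) ^ m ∣ a - h})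
    ⟨_, _, rfl, hd⟩

lemma padicDist_neg_le (m : ℕ) (a : ℤ_[p]) : padicDist p m (-a) ≤ padicDist p m a := by
  obtain ⟨h, hn, hd⟩ := exists_padicDist_eq m a
  rw [← hn, ← Int.natAbs_neg]
  refine padicDist_le_natAbs ?_
  rw [Int.cast_neg, ← neg_sub']
  exact hd.neg_right

lemma padicDist_neg (m : ℕ) (a : ℤ_[p]) : padicDist p m (-a) = padicDist p m a :=
  (padicDist_neg_le m a).antisymm (by simpa using padicDist_neg_le m (-a))

lemma padicDist_sub_comm (m : ℕ) (a b : ℤ_[p]) :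
    padicDist p m (a - b) = padicDist p m (b - a) := by
  rw [← padicDist_neg, neg_sub]

lemma padicDist_add_le (m : ℕ) (a b : ℤ_[p]) :
    padicDist p m (a + b) ≤ padicDist p m a + padicDist p m b := by
  obtain ⟨h₁, hn₁, hd₁⟩ := exists_padicDist_eq m a
  obtain ⟨h₂, hn₂, hd₂⟩ := exists_padicDist_eq m b
  rw [← hn₁, ← hn₂]
  refine (padicDist_le_natAbs (h := h₁ + h₂) ?_).trans (Int.natAbs_add_le h₁ h₂)
  rw [Int.cast_add, add_sub_add_comm]
  exact dvd_add hd₁ hd₂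

lemma padicDist_sub_le (m : ℕ) (a b c : ℤ_[p]) :
    padicDist p m (a - c) ≤ padicDist p m (a - b) + padicDist p m (b - c) := by
  simpa using padicDist_add_le m (a - b) (b - c)

lemma int_or_isPadicLiouville_iff {a : ℤ_[p]} :
    ((∃ n : ℤ, a = n) ∨ IsPadicLiouville p a) ↔
      ∃ C : ℝ, ∃ᶠ m in atTop, (padicDist p m a : ℝ) ≤ C * m := by
  constructor
  · rintro (⟨n, rfl⟩ | ⟨-, hlim⟩)
    · refine ⟨n.natAbs, Eventually.frequently ?_⟩
      filter_upwards [eventually_ge_atTop 1] with m hm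
      have hd : padicDist p m n ≤ n.natAbs := padicDist_le_natAbs (by simp)
      calc (padicDist p m n : ℝ) ≤ n.natAbs := by exact_mod_cast hd
        _ ≤ n.natAbs * m := le_mul_of_one_le_right (by positivity) (by exact_mod_cast hm)
    · obtain ⟨C, hC, -⟩ := EReal.lt_iff_exists_real_btwn.mp hlim
      refine ⟨C, ((frequently_lt_of_liminf_lt (by isBoundedDefault) hC).and_eventually
        (eventually_ge_atTop 1)).mono fun m ⟨hm, hm₁⟩ => ?_⟩
      rw [← EReal.coe_div, EReal.coe_lt_coe_iff, div_lt_iff₀ (Nat.cast_pos.mpr hm₁)] at hm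
      exact hm.le
  · rintro ⟨C, hC⟩
    by_cases hint : ∃ n : ℤ, a = n
    · exact .inl hint
    refine .inr ⟨fun n hn => hint ⟨n, hn⟩,
      (liminf_le_of_frequently_le' ?_).trans_lt (EReal.coe_lt_top C)⟩
    refine (hC.and_eventually (eventually_ge_atTop 1)).mono fun m ⟨hm, hm₁⟩ => ?_
    rw [← EReal.coe_div, EReal.coe_le_coe_iff, div_le_iff₀ (Nat.cast_pos.mpr hm₁)]
    exact hm

lemma WeaklyEquivalent.exists_padicDist_sub_le {A B : Multiset ℤ_[p]}
    (hAB : WeaklyEquivalent p A B) :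
    ∃ c : ℝ, ∀ x ∈ A, ∀ᶠ m in atTop, ∃ b ∈ B, (padicDist p m (x - b) : ℝ) ≤ c * m := by
  obtain ⟨n, a, b, c, rfl, rfl, -, hσ⟩ := hAB
  refine ⟨c, fun x hx => ?_⟩
  obtain ⟨i, rfl⟩ := List.mem_ofFn.mp (Multiset.mem_coe.mp hx)
  filter_upwards [eventually_ge_atTop 1] with m hm
  obtain ⟨σ, hσm⟩ := hσ m hm
  refine ⟨b (σ.symm i), Multiset.mem_coe.mpr (List.mem_ofFn.mpr ⟨_, rfl⟩), ?_⟩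
  simpa using hσm (σ.symm i)

lemma exists_int_or_isPadicLiouville_sub_of_eventually_near {x y : ℤ_[p]}
    {A A' : Multiset ℤ_[p]} {c c' : ℝ}
    (hx : ∀ᶠ m in atTop, ∃ a ∈ A, (padicDist p m (x - a) : ℝ) ≤ c * m)
    (hy : ∀ᶠ m in atTop, ∃ a' ∈ A', (padicDist p m (y - a') : ℝ) ≤ c' * m)
    (hxy : (∃ n : ℤ, x - y = n) ∨ IsPadicLiouville p (x - y)) :
    ∃ a ∈ A, ∃ a' ∈ A', (∃ n : ℤ, a - a' = n) ∨ IsPadicLiouville p (a - a') := by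
  obtain ⟨C, hC⟩ := int_or_isPadicLiouville_iff.mp hxy
  have hfreq : ∃ᶠ m in atTop, ∃ a ∈ {a | a ∈ A}, ∃ a' ∈ {a' | a' ∈ A'},
      (padicDist p m (a - a') : ℝ) ≤ (c + C + c') * m := by
    refine (hC.and_eventually (hx.and hy)).mono ?_
    rintro m ⟨hm, ⟨a, ha, hxa⟩, ⟨a', ha', hya'⟩⟩
    refine ⟨a, ha, a', ha', ?_⟩
    have htri : padicDist p m (a - a') ≤
        padicDist p m (x - a) + padicDist p m (x - y) + padicDist p m (y - a') := by
      have hax := padicDist_sub_le m a x a'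
      have hxa' := padicDist_sub_le m x y a'
      rw [padicDist_sub_comm m a x] at hax
      omega
    calc (padicDist p m (a - a') : ℝ)
        ≤ padicDist p m (x - a) + padicDist p m (x - y) + padicDist p m (y - a') := by
          exact_mod_cast htri
      _ ≤ c * m + C * m + c' * m := by gcongr
      _ = (c + C + c') * m := by ring
  obtain ⟨a, ha, hfreq_a⟩ := A.finite_toSet.frequently_exists.mp hfreq
  obtain ⟨a', ha', hfreq_aa'⟩ := A'.finite_toSet.frequently_exists.mp hfreq_a
  exact ⟨a, ha, a', ha', int_or_isPadicLiouville_iff.mpr ⟨_, hfreq_aa'⟩⟩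

lemma IsLiouvillePartition.disjoint {A : Multiset ℤ_[p]} {k : ℕ}
    {P : Fin k → Multiset ℤ_[p]} (hP : IsLiouvillePartition p A P) {g h : Fin k}
    (hgh : g ≠ h) : Disjoint (P g) (P h) :=
  Multiset.disjoint_left.mpr fun hz₁ hz₂ => hP.2 g h hgh _ hz₁ _ hz₂ (.inl ⟨0, by simp⟩)

end

/-- If `A_1,…,A_k` form a Liouville partition of `A` and `B_g` is
weakly equivalent to `A_g` for each `g`, then `B_1,…,B_k` form a Liouville partition of
their multiset union; in particular the `B_g` are pairwise disjoint. -/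
theorem liouvillePartition_of_weaklyEquivalent_parts
    (p : ℕ) [Fact p.Prime] {k : ℕ}
    (A : Multiset ℤ_[p]) (PA PB : Fin k → Multiset ℤ_[p])
    (hA : IsLiouvillePartition p A PA)
    (hW : ∀ g, WeaklyEquivalent p (PB g) (PA g)) :
    IsLiouvillePartition p (∑ g, PB g) PB ∧
      ∀ g h : Fin k, g ≠ h → Disjoint (PB g) (PB h) := by
  have hB : IsLiouvillePartition p (∑ g, PB g) PB := by
    refine ⟨rfl, fun g h hgh x hx y hy hxy => ?_⟩
    obtain ⟨c, hc⟩ := (hW g).exists_padicDist_sub_le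
    obtain ⟨c', hc'⟩ := (hW h).exists_padicDist_sub_le
    obtain ⟨a, ha, a', ha', haa'⟩ :=
      exists_int_or_isPadicLiouville_sub_of_eventually_near (hc x hx) (hc' y hy) hxy
    exact hA.2 g h hgh a ha a' ha' haa'
  exact ⟨hB, fun g h hgh => hB.disjoint hgh⟩
end

section
/- For a, b ∈ ℤ_p, the singleton multisets {a} and {b} are weakly equivalent if and only if a − b ∈ ℤ. Equivalently: there exists a real constant c > 0 such that d_m(a − b) ≤ c·m for all m ≥ 1 if and only if a − b is an integer. -/
open Filter

section AuxLemmas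

variable {p : ℕ} [Fact p.Prime]

lemma padicDist_exists_rep (m : ℕ) (x : ℤ_[p]) :
    ∃ h : ℤ, h.natAbs = padicDist p m x ∧ (p : ℤ_[p]) ^ m ∣ x - (h : ℤ_[p]) := by
  have hne : {k : ℕ | ∃ h : ℤ, h.natAbs = k ∧ (p : ℤ_[p]) ^ m ∣ x - (h : ℤ_[p])}.Nonempty := by
    refine ⟨(x.appr m : ℤ).natAbs, (x.appr m : ℤ), rfl, ?_⟩
    have := x.appr_spec m
    rw [Ideal.mem_span_singleton] at this
    exact_mod_cast this
  exact Nat.sInf_mem hne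

lemma padicDist_le (m : ℕ) (x : ℤ_[p]) (h : ℤ) (hd : (p : ℤ_[p]) ^ m ∣ x - (h : ℤ_[p])) :
    padicDist p m x ≤ h.natAbs :=
  Nat.sInf_le ⟨h, rfl, hd⟩

lemma eq_int_of_padicDist_bound (x : ℤ_[p]) (c : ℝ)
    (H : ∀ m : ℕ, 1 ≤ m → (padicDist p m x : ℝ) ≤ c * m) :
    ∃ n : ℤ, x = (n : ℤ_[p]) := by
  have hp1 : (1 : ℝ) < p := by exact_mod_cast (Fact.out : p.Prime).one_lt
  set c' : ℝ := max c 1 with hc'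
  have hc'1 : (1 : ℝ) ≤ c' := le_max_right _ _
  have hc'0 : (0 : ℝ) < c' := lt_of_lt_of_le one_pos hc'1
  have H' : ∀ m : ℕ, 1 ≤ m → (padicDist p m x : ℝ) ≤ c' * m := fun m hm =>
    (H m hm).trans (mul_le_mul_of_nonneg_right (le_max_left _ _) (by positivity))
  choose h hnat hdvd using fun m => padicDist_exists_rep (p := p) m x
  have hb : ∀ m : ℕ, 1 ≤ m → ((h m).natAbs : ℝ) ≤ c' * m := fun m hm => by
    rw [hnat m]; exact H' m hm
  -- eventually, m ≤ p^m / (6 c')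
  have hev : ∀ᶠ m : ℕ in atTop, (m : ℝ) ≤ (6 * c')⁻¹ * (p : ℝ) ^ m := by
    have ho := isLittleO_coe_const_pow_of_one_lt (R := ℝ) hp1
    have := ho.def (by positivity : (0 : ℝ) < (6 * c')⁻¹)
    filter_upwards [this] with m hm
    have hpm : (0 : ℝ) ≤ (p : ℝ) ^ m := by positivity
    simpa [Real.norm_eq_abs, abs_of_nonneg hpm, Nat.abs_cast] using hm
  obtain ⟨M₀, hM₀⟩ := eventually_atTop.1 hev
  set M := max M₀ 1 with hM
  have hM1 : 1 ≤ M := le_max_right _ _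
  -- for m ≥ M, h m = h M
  have hconst : ∀ m : ℕ, M ≤ m → h m = h M := by
    intro m hm
    induction m, hm using Nat.le_induction with
    | base => rfl
    | succ m hm ih =>
      have hm1 : 1 ≤ m := hM1.trans hm
      -- p^m divides h (m+1) - h m in ℤ
      have hdvd1 : (p : ℤ_[p]) ^ m ∣ ((h (m + 1) - h m : ℤ) : ℤ_[p]) := by
        have d1 := hdvd m
        have d2 : (p : ℤ_[p]) ^ m ∣ x - (h (m + 1) : ℤ_[p]) :=
          dvd_trans (pow_dvd_pow _ (Nat.le_succ m)) (hdvd (m + 1))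
        have : (p : ℤ_[p]) ^ m ∣ (x - (h m : ℤ_[p])) - (x - (h (m + 1) : ℤ_[p])) :=
          dvd_sub d1 d2
        push_cast
        convert this using 1
        ring
      rw [PadicInt.pow_p_dvd_int_iff] at hdvd1
      by_contra hne
      have hk0 : h (m + 1) - h m ≠ 0 := by
        intro h0
        apply hne
        rw [sub_eq_zero] at h0
        rw [h0, ih]
      -- then p^m ≤ |h (m+1) - h m|
      have hle : (p : ℤ) ^ m ≤ |h (m + 1) - h m| :=
        Int.le_of_dvd (abs_pos.mpr hk0) ((dvd_abs _ _).mpr hdvd1)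
      have hleR : ((p : ℝ)) ^ m ≤ ((h (m + 1) - h m).natAbs : ℝ) := by
        rw [Int.abs_eq_natAbs] at hle
        exact_mod_cast hle
      have htri : ((h (m + 1) - h m).natAbs : ℝ) ≤
          ((h (m + 1)).natAbs : ℝ) + ((h m).natAbs : ℝ) := by
        exact_mod_cast Int.natAbs_sub_le _ _
      have hub : ((h (m + 1) - h m).natAbs : ℝ) ≤ c' * (m + 1) + c' * m :=
        htri.trans (add_le_add (by exact_mod_cast hb (m + 1) (by omega)) (hb m hm1))
      have h3 : c' * (m + 1) + c' * m ≤ 3 * c' * m := by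
        have : (1 : ℝ) ≤ m := by exact_mod_cast hm1
        nlinarith
      have hgrow : (m : ℝ) ≤ (6 * c')⁻¹ * (p : ℝ) ^ m := hM₀ m ((le_max_left _ _).trans hm)
      have : (p : ℝ) ^ m ≤ 3 * c' * ((6 * c')⁻¹ * (p : ℝ) ^ m) := by
        calc (p : ℝ) ^ m ≤ ((h (m + 1) - h m).natAbs : ℝ) := hleR
          _ ≤ 3 * c' * m := hub.trans h3
          _ ≤ 3 * c' * ((6 * c')⁻¹ * (p : ℝ) ^ m) :=
              mul_le_mul_of_nonneg_left hgrow (by positivity)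
      have hpm : (0 : ℝ) < (p : ℝ) ^ m := by positivity
      rw [show 3 * c' * ((6 * c')⁻¹ * (p : ℝ) ^ m) = (3 * c' * (6 * c')⁻¹) * (p : ℝ) ^ m by ring]
        at this
      have h36 : 3 * c' * (6 * c')⁻¹ = 2⁻¹ := by
        field_simp
        ring
      rw [h36] at this
      nlinarith
  -- x = h M
  refine ⟨h M, ?_⟩
  by_contra hne
  have hxne : x - (h M : ℤ_[p]) ≠ 0 := sub_ne_zero.mpr hne
  have hnorm : (0 : ℝ) < ‖x - (h M : ℤ_[p])‖ := norm_pos_iff.mpr hxne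
  obtain ⟨k, hk⟩ := PadicInt.exists_pow_neg_lt p hnorm
  set m := max M k with hm
  have hdm : ‖x - (h M : ℤ_[p])‖ ≤ (p : ℝ) ^ (-(m : ℤ)) := by
    rw [PadicInt.norm_le_pow_iff_mem_span_pow, Ideal.mem_span_singleton]
    have := hdvd m
    rwa [hconst m (le_max_left _ _)] at this
  have hmono : (p : ℝ) ^ (-(m : ℤ)) ≤ (p : ℝ) ^ (-(k : ℤ)) := by
    apply zpow_le_zpow_right₀ hp1.le
    omega
  exact absurd (hdm.trans hmono) (not_le.mpr hk)

end AuxLemmas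

/-- For `a, b ∈ ℤ_p`, the singleton multisets `{a}` and `{b}` are weakly
equivalent if and only if `a - b ∈ ℤ`; equivalently, there exists `c > 0` with
`d_m(a - b) ≤ c·m` for all `m ≥ 1` if and only if `a - b` is an integer. -/
theorem singleton_weaklyEquivalent_iff
    (p : ℕ) [Fact p.Prime] (a b : ℤ_[p]) :
    (WeaklyEquivalent p {a} {b} ↔ ∃ n : ℤ, a - b = (n : ℤ_[p])) ∧
      ((∃ c : ℝ, 0 < c ∧ ∀ m : ℕ, 1 ≤ m → (padicDist p m (a - b) : ℝ) ≤ c * m) ↔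
        ∃ n : ℤ, a - b = (n : ℤ_[p])) := by
  have key : (∃ c : ℝ, 0 < c ∧ ∀ m : ℕ, 1 ≤ m → (padicDist p m (a - b) : ℝ) ≤ c * m) ↔
      ∃ n : ℤ, a - b = (n : ℤ_[p]) := by
    constructor
    · rintro ⟨c, _, hc⟩
      exact eq_int_of_padicDist_bound (a - b) c hc
    · rintro ⟨n, hn⟩
      refine ⟨(n.natAbs : ℝ) + 1, by positivity, fun m hm => ?_⟩
      have hd : (p : ℤ_[p]) ^ m ∣ (a - b) - (n : ℤ_[p]) := by
        rw [hn, sub_self]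
        exact dvd_zero _
      have h1 : padicDist p m (a - b) ≤ n.natAbs := padicDist_le m (a - b) n hd
      have h2 : (padicDist p m (a - b) : ℝ) ≤ (n.natAbs : ℝ) := by exact_mod_cast h1
      have hm1 : (1 : ℝ) ≤ m := by exact_mod_cast hm
      nlinarith [Nat.cast_nonneg (α := ℝ) n.natAbs]
  refine ⟨?_, key⟩
  rw [← key]
  constructor
  · rintro ⟨n, A, B, c, hA, hB, hc, hperm⟩
    have hn : n = 1 := by
      have := congrArg Multiset.card hA
      simpa using this.symm
    subst hn
    have hA0 : A 0 = a := by
      have : (List.ofFn A) = [A 0] := by simp [List.ofFn_succ]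
      rw [this] at hA
      have : ({a} : Multiset ℤ_[p]) = {A 0} := hA
      exact (Multiset.singleton_inj.mp this).symm
    have hB0 : B 0 = b := by
      have : (List.ofFn B) = [B 0] := by simp [List.ofFn_succ]
      rw [this] at hB
      have : ({b} : Multiset ℤ_[p]) = {B 0} := hB
      exact (Multiset.singleton_inj.mp this).symm
    refine ⟨c, hc, fun m hm => ?_⟩
    obtain ⟨σ, hσ⟩ := hperm m hm
    have := hσ 0
    have hσ0 : σ 0 = 0 := Subsingleton.elim _ _
    rwa [hσ0, hA0, hB0] at this
  · rintro ⟨c, hc, hbound⟩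
    refine ⟨1, fun _ => a, fun _ => b, c, ?_, ?_, hc, fun m hm => ⟨Equiv.refl _, fun i => ?_⟩⟩
    · simp
    · simp
    · exact hbound m hm
end

section
/- Choose η > 1 and α, α', β, β' ∈ [0, +∞) with α' < β', α' = αη, and β' = β/η. Let m be a positive integer and h an integer, and set h' = min{|h − km| : k ∈ ℤ} (the distance from h to the nearest multiple of m). Let c : ℤ → K be a coefficient function such that c_n ≠ 0 only when n ≡ h (mod m), and such that c_n = 0 for all n < 0 in case α = 0. Then sup_{ρ ∈ [α', β']} ‖c‖_ρ ≤ η^{−h'} · sup_{ρ ∈ [α, β]} ‖c‖_ρ. -/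
lemma key_bound (x η : ℝ) (hx : 0 ≤ x) (hη : 1 ≤ η) (e : ℤ) (h' : ℕ)
    (he : (h' : ℤ) ≤ e) : x ≤ η ^ (-(h' : ℤ)) * (x * η ^ e) := by
  have hη0 : 0 < η := lt_of_lt_of_le one_pos hη
  rw [mul_comm, mul_assoc, ← zpow_add₀ hη0.ne']
  have h1 : (1:ℝ) ≤ η ^ (e + -(h' : ℤ)) := one_le_zpow₀ hη (by omega)
  nlinarith

/-- The `ρ`-Gauss norm of a coefficient function `c : ℤ → K`:
`‖c‖_ρ = sup_n |c_n| ρ^n ∈ [0, +∞]` (with `0^0 = 1`). -/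
noncomputable def gaussNorm {K : Type*} [Field K] (v : AbsoluteValue K ℝ)
    (c : ℤ → K) (ρ : ℝ) : ENNReal :=
  ⨆ n : ℤ, ENNReal.ofReal (v (c n) * ρ ^ n)

/-- Choose `η > 1` and `α, α', β, β' ∈ [0, ∞)` with `α' < β'`,
`α' = αη`, `β' = β/η`.  Let `m` be a positive integer and `h ∈ ℤ`, with
`h' = min {|h - km| : k ∈ ℤ}`.  If `c : ℤ → K` is supported on exponents congruent to
`h` mod `m` (and on nonnegative exponents in case `α = 0`), then
`sup_{ρ ∈ [α',β']} ‖c‖_ρ ≤ η^{-h'} · sup_{ρ ∈ [α,β]} ‖c‖_ρ`. -/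
theorem gaussNorm_shrink_of_congruent_support
    {K : Type*} [Field K] (v : AbsoluteValue K ℝ)
    (hv : ∀ x y : K, v (x + y) ≤ max (v x) (v y))
    (η α α' β β' : ℝ) (hη : 1 < η)
    (hα : 0 ≤ α) (hβ : 0 ≤ β) (hα'0 : 0 ≤ α') (hβ'0 : 0 ≤ β')
    (hαβ' : α' < β') (hα' : α' = α * η) (hβ' : β' = β / η)
    (m : ℕ) (hm : 0 < m) (h : ℤ)
    (h' : ℕ) (hh' : IsLeast {j : ℕ | ∃ k : ℤ, j = (h - k * (m : ℤ)).natAbs} h')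
    (c : ℤ → K)
    (hsupp : ∀ n : ℤ, c n ≠ 0 → (m : ℤ) ∣ n - h)
    (hc0 : α = 0 → ∀ n : ℤ, n < 0 → c n = 0) :
    (⨆ ρ ∈ Set.Icc α' β', gaussNorm v c ρ) ≤
      ENNReal.ofReal (η ^ (-(h' : ℤ))) * ⨆ ρ ∈ Set.Icc α β, gaussNorm v c ρ := by
  have hη0 : (0:ℝ) < η := lt_trans one_pos hη
  refine iSup₂_le fun ρ hρ => iSup_le fun n => ?_
  by_cases hcn : c n = 0
  · simp [hcn]
  obtain ⟨k, hk⟩ := hsupp n hcn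
  have hmem : n.natAbs ∈ {j : ℕ | ∃ k : ℤ, j = (h - k * (m : ℤ)).natAbs} :=
    ⟨-k, by congr 1; linear_combination hk⟩
  have hn' : (h' : ℤ) ≤ n.natAbs := by exact_mod_cast hh'.2 hmem
  have hvn : 0 ≤ v (c n) * ρ ^ n := by
    apply mul_nonneg (v.nonneg _) (zpow_nonneg (le_trans hα'0 hρ.1) _)
  have hmain : ∃ σ ∈ Set.Icc α β,
      v (c n) * ρ ^ n ≤ η ^ (-(h' : ℤ)) * (v (c n) * σ ^ n) := by
    rcases le_or_gt 0 n with hn | hn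
    · refine ⟨ρ * η, ⟨?_, ?_⟩, ?_⟩
      · nlinarith [hρ.1, hρ.2]
      · have : ρ ≤ β / η := hβ' ▸ hρ.2
        calc ρ * η ≤ (β / η) * η := by nlinarith
          _ = β := by field_simp
      · have he : (h' : ℤ) ≤ n := le_trans hn' (by omega)
        calc v (c n) * ρ ^ n
            ≤ η ^ (-(h' : ℤ)) * ((v (c n) * ρ ^ n) * η ^ n) :=
              key_bound _ _ hvn hη.le n h' he
          _ = η ^ (-(h' : ℤ)) * (v (c n) * (ρ * η) ^ n) := by
              rw [mul_zpow]; ring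
    · have hαpos : 0 < α := by
        rcases lt_or_eq_of_le hα with h0 | h0
        · exact h0
        · exact absurd (hc0 h0.symm n hn) hcn
      have hρpos : 0 < ρ := lt_of_lt_of_le (by nlinarith) hρ.1
      refine ⟨ρ / η, ⟨?_, ?_⟩, ?_⟩
      · have : α * η ≤ ρ := hα' ▸ hρ.1
        rw [le_div_iff₀ hη0]; linarith
      · have hρβ' : ρ ≤ β / η := hβ' ▸ hρ.2
        have : ρ / η ≤ ρ := by
          rw [div_le_iff₀ hη0]; nlinarith
        have : β / η ≤ β := by
          rw [div_le_iff₀ hη0]; nlinarith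
        linarith
      · have he : (h' : ℤ) ≤ -n := le_trans hn' (by omega)
        calc v (c n) * ρ ^ n
            ≤ η ^ (-(h' : ℤ)) * ((v (c n) * ρ ^ n) * η ^ (-n)) :=
              key_bound _ _ hvn hη.le (-n) h' he
          _ = η ^ (-(h' : ℤ)) * (v (c n) * (ρ / η) ^ n) := by
              simp only [zpow_neg, div_zpow, div_eq_mul_inv, mul_zpow, inv_zpow]; ring
  obtain ⟨σ, hσ, hle⟩ := hmain
  calc ENNReal.ofReal (v (c n) * ρ ^ n)
      ≤ ENNReal.ofReal (η ^ (-(h' : ℤ)) * (v (c n) * σ ^ n)) :=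
        ENNReal.ofReal_le_ofReal hle
    _ = ENNReal.ofReal (η ^ (-(h' : ℤ))) * ENNReal.ofReal (v (c n) * σ ^ n) :=
        ENNReal.ofReal_mul (zpow_nonneg hη0.le _)
    _ ≤ ENNReal.ofReal (η ^ (-(h' : ℤ))) * ⨆ ρ ∈ Set.Icc α β, gaussNorm v c ρ := by
        gcongr
        exact le_trans (le_iSup (fun n => ENNReal.ofReal (v (c n) * σ ^ n)) n)
          (le_iSup₂ (f := fun ρ _ => gaussNorm v c ρ) σ hσ)
end

section
/- Choose η > 1 and α, α', β, β' ∈ [0, +∞) with α' < β', α' = αη, and β' = β/η. Let m be a positive integer. Let c : ℤ → K be a coefficient function such that c_n ≠ 0 only when m divides n, and such that c_n = 0 for all n < 0 in case α = 0. Let c' : ℤ → K agree with c except that c'_0 = 0 (i.e., c' records the nonconstant coefficients of c). Then sup_{ρ ∈ [α', β']} ‖c'‖_ρ ≤ η^{−m} · sup_{ρ ∈ [α, β]} ‖c‖_ρ. -/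
/-- Choose `η > 1` and `α, α', β, β' ∈ [0, ∞)` with `α' < β'`,
`α' = αη`, `β' = β/η`.  Let `m` be a positive integer.  If `c : ℤ → K` is supported on
exponents divisible by `m` (and on nonnegative exponents in case `α = 0`), and `c'`
agrees with `c` except that `c'_0 = 0`, then
`sup_{ρ ∈ [α',β']} ‖c'‖_ρ ≤ η^{-m} · sup_{ρ ∈ [α,β]} ‖c‖_ρ`. -/
theorem gaussNorm_shrink_of_multiple_support_remove_constant
    {K : Type*} [Field K] (v : AbsoluteValue K ℝ)
    (hv : ∀ x y : K, v (x + y) ≤ max (v x) (v y))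
    (η α α' β β' : ℝ) (hη : 1 < η)
    (hα : 0 ≤ α) (hβ : 0 ≤ β) (hα'0 : 0 ≤ α') (hβ'0 : 0 ≤ β')
    (hαβ' : α' < β') (hα' : α' = α * η) (hβ' : β' = β / η)
    (m : ℕ) (hm : 0 < m)
    (c : ℤ → K)
    (hsupp : ∀ n : ℤ, c n ≠ 0 → (m : ℤ) ∣ n)
    (hc0 : α = 0 → ∀ n : ℤ, n < 0 → c n = 0) :
    (⨆ ρ ∈ Set.Icc α' β', gaussNorm v (Function.update c 0 0) ρ) ≤
      ENNReal.ofReal (η ^ (-(m : ℤ))) * ⨆ ρ ∈ Set.Icc α β, gaussNorm v c ρ := by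
  have hηpos : (0:ℝ) < η := lt_trans one_pos hη
  have hβ'β : β' ≤ β := by rw [hβ']; exact div_le_self hβ hη.le
  have hαα' : α ≤ α' := by rw [hα']; exact le_mul_of_one_le_right hα hη.le
  set S := ⨆ ρ ∈ Set.Icc α β, gaussNorm v c ρ with hSdef
  have hkey : ∀ σ ∈ Set.Icc α β, ∀ n : ℤ,
      ENNReal.ofReal (v (c n) * σ ^ n) ≤ S := by
    intro σ hσ n
    calc ENNReal.ofReal (v (c n) * σ ^ n) ≤ gaussNorm v c σ := by rw [gaussNorm]; exact le_iSup (fun k : ℤ => ENNReal.ofReal (v (c k) * σ ^ k)) n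
      _ ≤ S := le_iSup₂ (f := fun ρ (_ : ρ ∈ Set.Icc α β) => gaussNorm v c ρ) σ hσ
  refine iSup₂_le fun ρ hρ => iSup_le fun n => ?_
  rcases eq_or_ne (Function.update c 0 0 n) 0 with h0 | h0
  · simp [h0]
  have hn0 : n ≠ 0 := by rintro rfl; simp at h0
  rw [Function.update_of_ne hn0] at h0 ⊢
  have hdvd : (m:ℤ) ∣ n := hsupp n h0
  have step : ∀ σ ∈ Set.Icc α β, ρ ^ n ≤ η ^ (-(m:ℤ)) * σ ^ n →
      ENNReal.ofReal (v (c n) * ρ ^ n) ≤ ENNReal.ofReal (η ^ (-(m:ℤ))) * S := by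
    intro σ hσ hle
    have h1 : v (c n) * ρ ^ n ≤ η ^ (-(m:ℤ)) * (v (c n) * σ ^ n) := by
      rw [mul_left_comm]
      exact mul_le_mul_of_nonneg_left hle (v.nonneg _)
    calc ENNReal.ofReal (v (c n) * ρ ^ n)
        ≤ ENNReal.ofReal (η ^ (-(m:ℤ)) * (v (c n) * σ ^ n)) := ENNReal.ofReal_le_ofReal h1
      _ = ENNReal.ofReal (η ^ (-(m:ℤ))) * ENNReal.ofReal (v (c n) * σ ^ n) :=
          ENNReal.ofReal_mul (zpow_nonneg hηpos.le _)
      _ ≤ _ := mul_le_mul_right (hkey σ hσ n) _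
  rcases lt_or_gt_of_ne hn0 with hn | hn
  · -- n < 0
    have hαpos : 0 < α := by
      rcases hα.lt_or_eq with h | h
      · exact h
      · exact absurd (hc0 h.symm n hn) h0
    have hα'pos : 0 < α' := hα' ▸ mul_pos hαpos hηpos
    have hnm : n ≤ -(m:ℤ) := by
      have := Int.le_of_dvd (by omega) ((dvd_neg).mpr hdvd)
      omega
    refine step α ⟨le_refl α, le_trans hαα' (le_trans hαβ'.le hβ'β)⟩ ?_
    have hρpos : 0 < ρ := lt_of_lt_of_le hα'pos hρ.1
    have h1 : ρ ^ n ≤ (α * η) ^ n := by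
      obtain ⟨k, rfl⟩ : ∃ k : ℕ, n = -(k:ℤ) := ⟨n.natAbs, by omega⟩
      rw [zpow_neg, zpow_neg, zpow_natCast, zpow_natCast]
      have hαη : α * η ≤ ρ := hα' ▸ hρ.1
      exact inv_anti₀ (pow_pos (mul_pos hαpos hηpos) k)
        (pow_le_pow_left₀ (mul_pos hαpos hηpos).le hαη k)
    refine h1.trans ?_
    rw [mul_zpow, mul_comm]
    refine mul_le_mul_of_nonneg_right ?_ (zpow_nonneg hαpos.le n)
    exact zpow_le_zpow_right₀ hη.le hnm
  · -- n > 0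
    have hnm : (m:ℤ) ≤ n := Int.le_of_dvd hn hdvd
    refine step β ⟨le_trans hαα' (le_trans hαβ'.le hβ'β), le_refl β⟩ ?_
    have hρ0 : 0 ≤ ρ := le_trans hα'0 hρ.1
    have hρβ : ρ ≤ β / η := hβ' ▸ hρ.2
    obtain ⟨k, rfl⟩ : ∃ k : ℕ, n = (k:ℤ) := ⟨n.natAbs, by omega⟩
    have h1 : ρ ^ (k:ℤ) ≤ (β / η) ^ (k:ℤ) := by
      rw [zpow_natCast, zpow_natCast]
      exact pow_le_pow_left₀ hρ0 hρβ k
    refine h1.trans ?_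
    rw [div_eq_mul_inv, mul_zpow, ← zpow_neg_one, ← zpow_mul, mul_comm]
    refine mul_le_mul_of_nonneg_right ?_ (zpow_nonneg hβ (k:ℤ))
    have : (-1 : ℤ) * (k:ℤ) ≤ -(m:ℤ) := by omega
    exact zpow_le_zpow_right₀ hη.le this
end

section
/- (Cyclic vector theorem.) Let R be a field of characteristic 0 and let d : R → R be a nonzero derivation (an additive map satisfying d(rs) = r·d(s) + s·d(r)). Let M be a differential module over (R, d) of dimension n. Then M admits a cyclic vector, i.e., there exists v ∈ M such that v, D(v), …, D^{n−1}(v) form an R-basis of M. -/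
/-!
It suffices to pass from `k` to `k + 1` independent iterates, for `k < dim M`. Take `v` such
that `v, D v, …, D^{k-1} v` are independent and `w` outside their span. If for
every `u` the vectors `u, D u, …, D^k u` were dependent, an alternating form `F` with
`F (v, …, D^{k-1} v, w) = 1` would vanish on `(D^i (v + N • r • w))_i` for all `N : ℕ` and
`r : R`. The coefficient of `N` in this polynomial is a differential operator in `r` of
order `k` with leading coefficient `F (v, …, D^{k-1} v, w) = 1`. But a nonzero operator
`∑ uᵢ dⁱ` cannot kill all of `R` when `d ≠ 0` and the characteristic is zero: comparing its
values at `r * s` and at `r`, with `d s ≠ 0`, lowers the order.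
-/

open Finset Function Module Polynomial

section Leibniz

variable {R M : Type*} [Semiring R] [AddCommMonoid M] [Module R M] {d : R →+ R} {D : M →+ M}
  (hD : ∀ (r : R) (x : M), D (r • x) = d r • x + r • D x)
include hD

theorem iterate_map_smul_eq_sum_choose (k : ℕ) (r : R) (x : M) :
    D^[k] (r • x) = ∑ i ∈ range (k + 1), k.choose i • (d^[i] r • D^[k - i] x) := by
  induction k with
  | zero => simp
  | succ k ih =>
    rw [sum_choose_succ_nsmul (fun i j => d^[i] r • D^[j] x), iterate_succ_apply', ih, map_sum]
    simp only [map_nsmul, hD, smul_add, sum_add_distrib, ← iterate_succ_apply' d]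
    rw [add_comm]
    congr 1
    refine sum_congr rfl fun i hi => ?_
    rw [← iterate_succ_apply' D, Nat.succ_eq_add_one, Nat.sub_add_comm (mem_range_succ_iff.1 hi)]

theorem iterate_map_smul_eq_sum_range_choose {k n : ℕ} (hkn : k < n) (r : R) (x : M) :
    D^[k] (r • x) = ∑ i ∈ range n, k.choose i • (d^[i] r • D^[k - i] x) := by
  rw [iterate_map_smul_eq_sum_choose hD]
  refine sum_subset (range_subset_range.2 hkn) fun i _ hi => ?_
  rw [Nat.choose_eq_zero_of_lt (by simpa using hi), zero_smul]

end Leibniz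

theorem eq_zero_of_forall_sum_mul_iterate_eq_zero {R : Type*} [CommRing R] [IsDomain R]
    [CharZero R] {d : R →+ R} (hleib : ∀ r s : R, d (r * s) = r * d s + s * d r) (hd : d ≠ 0)
    {m : ℕ} {u : ℕ → R} (h : ∀ r, ∑ i ∈ range (m + 1), u i * d^[i] r = 0) : u m = 0 := by
  have hleib_smul : ∀ r x : R, d (r • x) = d r • x + r • d x := fun r x => by
    simp only [smul_eq_mul, hleib]; ring
  obtain ⟨s, hs⟩ : ∃ s, d s ≠ 0 := by
    by_contra! h0
    exact hd (AddMonoidHom.ext h0)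
  induction m generalizing u with
  | zero => simpa using h 1
  | succ m ih =>
    -- `c` are the coefficients of `r ↦ L (r * s) - s * L r`, where `L r = ∑ u i * d^[i] r`;
    -- this operator has order `m` and leading coefficient `(m + 1) * d s * u (m + 1)`
    let c : ℕ → R := fun b => ∑ i ∈ range (m + 2), u i * (i.choose b • d^[i - b] s) - u b * s
    have hc_top : c (m + 1) = 0 := by
      simp only [c]
      rw [sum_range_succ, sum_eq_zero fun i hi => by
        rw [Nat.choose_eq_zero_of_lt (mem_range.1 hi), zero_smul, mul_zero]]
      simp
    have hc : ∀ r, ∑ b ∈ range (m + 1), c b * d^[b] r = 0 := by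
      intro r
      have hexpand : ∑ b ∈ range (m + 2), c b * d^[b] r =
          ∑ i ∈ range (m + 2), u i * d^[i] (r * s) - s * ∑ i ∈ range (m + 2), u i * d^[i] r := by
        simp only [c, sub_mul, sum_sub_distrib, sum_mul, mul_sum]
        congr 1
        · rw [sum_comm]
          refine sum_congr rfl fun i hi => ?_
          rw [← smul_eq_mul r s, iterate_map_smul_eq_sum_range_choose hleib_smul (mem_range.1 hi),
            mul_sum]
          refine sum_congr rfl fun b _ => ?_
          simp only [smul_eq_mul, nsmul_eq_mul]
          ring
        · exact sum_congr rfl fun b _ => by ring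
      rw [sum_range_succ, hc_top, zero_mul, add_zero] at hexpand
      rw [hexpand, h, h, mul_zero, sub_zero]
    have hc_lead : c m = u (m + 1) * ((m + 1) • d s) := by
      simp only [c]
      rw [sum_range_succ, sum_range_succ, sum_eq_zero fun i hi => by
        rw [Nat.choose_eq_zero_of_lt (mem_range.1 hi), zero_smul, mul_zero]]
      simp
    have hc_m := ih hc
    rw [hc_lead, mul_eq_zero, nsmul_eq_mul] at hc_m
    simpa [hs, Nat.cast_add_one_ne_zero] using hc_m

theorem MultilinearMap.exists_polynomial_eval_eq_map_add_smul {R ι : Type*} {M : ι → Type*}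
    [CommRing R] [Fintype ι] [DecidableEq ι] [∀ i, AddCommMonoid (M i)] [∀ i, Module R (M i)]
    (f : MultilinearMap R M R) (x y : ∀ i, M i) :
    ∃ p : R[X], (∀ t : R, p.eval t = f (x + t • y)) ∧ p.coeff 1 = f.linearDeriv x y := by
  refine ⟨∑ s : Finset ι, C (f (s.piecewise y x)) * X ^ #s, fun t => ?_, ?_⟩
  · rw [add_comm, f.map_add_univ, eval_finsetSum]
    refine sum_congr rfl fun s _ => ?_
    have hpiece : s.piecewise (t • y) x =
        s.piecewise (fun i => t • s.piecewise y x i) (s.piecewise y x) := by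
      ext i; by_cases hi : i ∈ s <;> simp [hi]
    rw [hpiece, f.map_piecewise_smul, prod_const, smul_eq_mul, eval_mul, eval_C, eval_pow, eval_X,
      mul_comm]
  · rw [finsetSum_coeff, linearDeriv_apply]
    simp only [coeff_C_mul_X_pow]
    rw [← sum_filter]
    have hsingletons :
        univ.filter (fun s : Finset ι => 1 = #s) = univ.map ⟨singleton, singleton_injective⟩ := by
      ext s
      simp [eq_comm, card_eq_one]
    rw [hsingletons, sum_map]
    simp [piecewise_singleton]

theorem MultilinearMap.linearDeriv_eq_zero_of_forall_nsmul {R ι : Type*} {M : ι → Type*}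
    [CommRing R] [IsDomain R] [CharZero R] [Fintype ι] [DecidableEq ι]
    [∀ i, AddCommMonoid (M i)] [∀ i, Module R (M i)]
    (f : MultilinearMap R M R) (x y : ∀ i, M i) (h : ∀ N : ℕ, f (x + N • y) = 0) :
    f.linearDeriv x y = 0 := by
  obtain ⟨p, hp, hcoeff⟩ := f.exists_polynomial_eval_eq_map_add_smul x y
  have hp_zero : p = 0 := by
    refine p.eq_zero_of_infinite_isRoot
      ((Set.infinite_range_of_injective Nat.cast_injective).mono ?_)
    rintro _ ⟨N, rfl⟩
    simpa [IsRoot, hp, Nat.cast_smul_eq_nsmul] using h N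
  rw [← hcoeff, hp_zero, coeff_zero]

theorem LinearIndependent.exists_alternatingMap_eq_one {K V ι : Type*} [Field K] [AddCommGroup V]
    [Module K V] [Fintype ι] [DecidableEq ι] {y : ι → V} (hy : LinearIndependent K y) :
    ∃ F : V [⋀^ι]→ₗ[K] K, F y = 1 := by
  obtain ⟨g, hg⟩ := LinearMap.exists_extend (Basis.span hy).equivFun.toLinearMap
  refine ⟨Matrix.detRowAlternating.compLinearMap g, ?_⟩
  have hmatrix : (fun i => g (y i)) = (1 : Matrix ι ι K) := by
    funext i j
    have hgy := congr_fun (LinearMap.congr_fun hg (Basis.span hy i)) j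
    simp only [Basis.span_apply, LinearMap.coe_comp, Submodule.coe_subtype, comp_apply,
      LinearEquiv.coe_coe, Basis.equivFun_apply, Basis.span_repr_eq_single] at hgy
    rw [hgy, Matrix.one_apply, Finsupp.single_apply]
  rw [AlternatingMap.compLinearMap_apply, hmatrix]
  exact Matrix.det_one

section Domain

variable {R M : Type*} [CommRing R] [IsDomain R] [CharZero R] [AddCommGroup M] [Module R M]
  {d : R →+ R} {D : M →+ M}
  (hleib : ∀ r s : R, d (r * s) = r * d s + s * d r) (hd : d ≠ 0)
  (hD : ∀ (r : R) (x : M), D (r • x) = d r • x + r • D x)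
include hleib hd hD

theorem map_update_last_iterate_eq_zero {k : ℕ}
    (F : MultilinearMap R (fun _ : Fin (k + 1) => M) R) (hF : ∀ u, F (fun i => D^[i] u) = 0)
    (v w : M) : F (update (fun i => D^[i] v) (Fin.last k) w) = 0 := by
  let a : Fin (k + 1) → M := fun i => D^[i] v
  let g : ℕ → Fin (k + 1) → M := fun b i => (i : ℕ).choose b • D^[i - b] w
  have hline : ∀ (r : R) (N : ℕ), (fun i : Fin (k + 1) => D^[i] (v + N • r • w)) =
      a + N • ∑ b ∈ range (k + 1), d^[b] r • g b := by
    intro r N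
    funext i
    simp only [iterate_map_add, iterate_map_nsmul, iterate_map_smul_eq_sum_range_choose hD i.isLt,
      Pi.add_apply, Pi.smul_apply, Finset.sum_apply, g, a, smul_comm (_ : ℕ) (d^[_] r)]
  have hcoeff : ∀ r, ∑ b ∈ range (k + 1), F.linearDeriv a (g b) * d^[b] r = 0 := by
    intro r
    have := F.linearDeriv_eq_zero_of_forall_nsmul a _ fun N => hline r N ▸ hF _
    simpa only [map_sum, map_smul, smul_eq_mul, mul_comm] using this
  have hlead := eq_zero_of_forall_sum_mul_iterate_eq_zero hleib hd hcoeff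
  rw [MultilinearMap.linearDeriv_apply, sum_eq_single (Fin.last k)] at hlead
  · simpa [g] using hlead
  · intro i _ hi
    have hgi : g k i = 0 := by simp [g, Nat.choose_eq_zero_of_lt (Fin.val_lt_last hi)]
    rw [hgi, F.map_update_zero]
  · simp

end Domain

section Field

variable {R M : Type*} [Field R] [CharZero R] [AddCommGroup M] [Module R M]
  {d : R →+ R} {D : M →+ M}
  (hleib : ∀ r s : R, d (r * s) = r * d s + s * d r) (hd : d ≠ 0)
  (hD : ∀ (r : R) (x : M), D (r • x) = d r • x + r • D x)
include hleib hd hD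

theorem exists_linearIndependent_iterate_succ {k : ℕ} {v : M}
    (hv : LinearIndependent R fun i : Fin k => D^[i] v) (hk : k < finrank R M) :
    ∃ u : M, LinearIndependent R fun i : Fin (k + 1) => D^[i] u := by
  obtain ⟨w, hw⟩ := exists_linearIndependent_snoc_of_lt_finrank hv hk
  obtain ⟨F, hF⟩ := hw.exists_alternatingMap_eq_one
  by_contra! hdep
  have hFw := map_update_last_iterate_eq_zero hleib hd hD F.toMultilinearMap
    (fun u => F.map_linearDependent _ (hdep u)) v w
  rw [← Fin.snoc_init_self (fun i : Fin (k + 1) => D^[i] v), Fin.update_snoc_last] at hFw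
  exact one_ne_zero (hF.symm.trans hFw)

theorem exists_linearIndependent_iterate {k : ℕ} (hk : k ≤ finrank R M) :
    ∃ v : M, LinearIndependent R fun i : Fin k => D^[i] v := by
  induction k with
  | zero => exact ⟨0, linearIndependent_empty_type⟩
  | succ k ih =>
    obtain ⟨v, hv⟩ := ih (by omega)
    exact exists_linearIndependent_iterate_succ hleib hd hD hv hk

end Field

/-- **Cyclic vector theorem.** Let `R` be a field of characteristic 0
with a nonzero derivation `d`, and let `(M, D)` be a differential module over `(R, d)`
of dimension `n`.  Then `M` admits a cyclic vector: there is `v ∈ M` such that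
`v, D v, …, D^{n-1} v` form an `R`-basis of `M`. -/
theorem cyclic_vector_theorem
    {R : Type*} [Field R] [CharZero R]
    (d : R →+ R)
    (hleib : ∀ r s : R, d (r * s) = r * d s + s * d r)
    (hd : d ≠ 0)
    {M : Type*} [AddCommGroup M] [Module R M] [FiniteDimensional R M]
    (D : M →+ M)
    (hD : ∀ (r : R) (x : M), D (r • x) = d r • x + r • D x) :
    ∃ (v : M) (b : Module.Basis (Fin (Module.finrank R M)) R M),
      ∀ i : Fin (Module.finrank R M), b i = (⇑D)^[(i : ℕ)] v := by
  obtain ⟨v, hv⟩ := exists_linearIndependent_iterate hleib hd hD le_rfl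
  exact ⟨v, basisOfLinearIndependentOfCardEqFinrank' _ hv (Fintype.card_fin _), fun i => by simp⟩
end

section
/- Let F be a field of characteristic 0 with algebraic closure F̄. Suppose λ_1, λ_1' ∈ F̄ are conjugate over F, λ_2, λ_2' ∈ F̄ are conjugate over F, and both differences λ_1 − λ_2 and λ_1' − λ_2' are integers. Then λ_1 − λ_2 = λ_1' − λ_2'. -/
open Polynomial

private lemma minpoly_shift_eq {F K : Type*} [Field F] [Field K] [Algebra F K]
    [Algebra.IsAlgebraic F K] (x y : K) (c : ℤ)
    (h : minpoly F x = minpoly F y) :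
    minpoly F (x + (c : K)) = minpoly F (y + (c : K)) := by
  have hx : (c : K) = algebraMap F K ((c : ℤ) : F) := by
    simp
  rw [hx, minpoly.add_algebraMap, minpoly.add_algebraMap, h]

/-- Let `F` be a field of characteristic 0 with algebraic closure `K`.
If `l₁, l₁' ∈ K` are conjugate over `F`, `l₂, l₂' ∈ K` are conjugate over `F`, and both
`l₁ - l₂` and `l₁' - l₂'` are integers, then `l₁ - l₂ = l₁' - l₂'`. -/
theorem conjugate_pairs_integer_differences_equal
    {F K : Type*} [Field F] [CharZero F] [Field K] [Algebra F K] [IsAlgClosure F K]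
    (l₁ l₁' l₂ l₂' : K)
    (hconj₁ : minpoly F l₁ = minpoly F l₁')
    (hconj₂ : minpoly F l₂ = minpoly F l₂')
    (n₁ : ℤ) (hn₁ : l₁ - l₂ = (n₁ : K))
    (n₂ : ℤ) (hn₂ : l₁' - l₂' = (n₂ : K)) :
    l₁ - l₂ = l₁' - l₂' := by
  have halg : Algebra.IsAlgebraic F K := IsAlgClosure.isAlgebraic
  have hK : CharZero K := charZero_of_injective_algebraMap (algebraMap F K).injective
  rw [hn₁, hn₂]
  by_contra hne
  have hne' : n₁ ≠ n₂ := fun h => hne (by rw [h])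
  -- key: l₂ + n₂ and l₂ + n₁ are conjugate
  have h1 : l₁' = l₂' + (n₂ : K) := by linear_combination hn₂
  have h2 : l₁ = l₂ + (n₁ : K) := by linear_combination hn₁
  have hkey : minpoly F (l₂ + (n₂ : K)) = minpoly F (l₂ + (n₁ : K)) := by
    have := minpoly_shift_eq (F := F) l₂' l₂ n₂ hconj₂.symm
    rw [← h1] at this
    rw [← this, ← hconj₁, h2]
  -- the step: any conjugate of l₂ shifted by n₂ - n₁ is again a conjugate of l₂
  have hstep : ∀ x : K, minpoly F x = minpoly F l₂ →
      minpoly F (x + ((n₂ - n₁ : ℤ) : K)) = minpoly F l₂ := by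
    intro x hx
    have ha := minpoly_shift_eq (F := F) x l₂ n₂ hx
    rw [hkey] at ha
    have hb := minpoly_shift_eq (F := F) (x + (n₂ : K)) (l₂ + (n₁ : K)) (-n₁) ha
    have e1 : x + (n₂ : K) + ((-n₁ : ℤ) : K) = x + ((n₂ - n₁ : ℤ) : K) := by
      push_cast; ring
    have e2 : l₂ + (n₁ : K) + ((-n₁ : ℤ) : K) = l₂ := by push_cast; ring
    rwa [e1, e2] at hb
  set d : K := ((n₂ - n₁ : ℤ) : K) with hd
  have hdne : d ≠ 0 := by
    simp only [hd, Int.cast_ne_zero, sub_ne_zero]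
    exact fun h => hne' h.symm
  have hiter : ∀ k : ℕ, minpoly F (l₂ + (k : K) * d) = minpoly F l₂ := by
    intro k
    induction k with
    | zero => simp
    | succ k ih =>
      have : l₂ + ((k + 1 : ℕ) : K) * d = (l₂ + (k : K) * d) + d := by push_cast; ring
      rw [this]
      exact hstep _ ih
  -- all these elements are roots of a fixed nonzero polynomial, but they're distinct
  have hint : IsIntegral F l₂ := Algebra.IsIntegral.isIntegral l₂
  have hp0 : minpoly F l₂ ≠ 0 := minpoly.ne_zero hint
  set q : K[X] := (minpoly F l₂).map (algebraMap F K) with hq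
  have hq0 : q ≠ 0 := Polynomial.map_ne_zero hp0
  have hfin : Set.Finite {x : K | q.IsRoot x} := Polynomial.finite_setOf_isRoot hq0
  have hinf : Set.Infinite {x : K | q.IsRoot x} := by
    apply Set.infinite_of_injective_forall_mem (f := fun k : ℕ => l₂ + (k : K) * d)
    · intro a b hab
      simp only at hab
      have h' : (a : K) * d = (b : K) * d := by linear_combination hab
      exact_mod_cast mul_right_cancel₀ hdne h'
    · intro k
      have hroot : (Polynomial.aeval (l₂ + (k : K) * d)) (minpoly F l₂) = 0 := by
        conv_lhs => rw [← hiter k]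
        exact minpoly.aeval F _
      simp only [Set.mem_setOf_eq, Polynomial.IsRoot, hq, Polynomial.eval_map,
        ← Polynomial.aeval_def, hroot]
  exact hinf hfin
end

section
/- Let F be an algebraically closed field of characteristic 0, let n be a positive integer, and let H be a commutative subgroup of GL_n(F) all of whose elements have finite order. Then H is isomorphic to a subgroup of (ℚ/ℤ)^n, i.e., there exists an injective group homomorphism from H into (ℚ/ℤ)^n. -/
/-!
A torsion element of `GL_n(F)` is annihilated by the separable polynomial `X ^ m - 1`, so it is
semisimple. A commutative group of such matrices is therefore simultaneously diagonalizable: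
`F ^ n` is spanned by joint eigenspaces, at most `n` of which are nonzero since they are
independent. Each nonzero joint eigenspace carries a character `H → Fˣ`, whose values are roots
of unity, and an element acting trivially on all of them is the identity. Finally the roots of
unity of a field of characteristic zero lie in its algebraic closure of `ℚ`, which embeds in `ℂ`,
where `q ↦ exp (2πiq)` identifies `ℚ/ℤ` with the roots of unity.
-/

open Complex Function Module
open scoped Real

lemma exists_injective_torsion_of_le_range {G H : Type*} [Group G] [CommGroup H] {f : G →* H}
    (hf : Injective f) (h : CommGroup.torsion H ≤ f.range) :
    ∃ g : CommGroup.torsion H →* G, Injective g :=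
  ⟨(MonoidHom.ofInjective hf).symm.toMonoidHom.comp (Subgroup.inclusion h),
    (MonoidHom.ofInjective hf).symm.injective.comp (Subgroup.inclusion_injective h)⟩

noncomputable def ratCircleExp : Multiplicative (AddCircle (1 : ℚ)) →* ℂˣ :=
  AddMonoidHom.toMultiplicativeLeft <| QuotientAddGroup.lift _
    { toFun := fun q ↦ .ofMul (Units.mk0 (exp (2 * π * I * q)) (exp_ne_zero _))
      map_zero' := by ext; simp
      map_add' := fun a b ↦ by ext; simp [mul_add, exp_add] }
    (by
      rintro _ ⟨k, rfl⟩
      ext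
      simpa [mul_comm] using exp_int_mul_two_pi_mul_I k)

lemma ratCircleExp_coe (q : ℚ) :
    (ratCircleExp (.ofAdd (q : AddCircle (1 : ℚ))) : ℂ) = exp (2 * π * I * q) := rfl

lemma ratCircleExp_injective : Injective ratCircleExp := by
  rw [injective_iff_map_eq_one]
  intro x hx
  induction x using Multiplicative.rec with | ofAdd x => ?_
  induction x using QuotientAddGroup.induction_on with | H q => ?_
  obtain ⟨k, hk⟩ := exp_eq_one_iff.mp (congrArg Units.val hx)
  have hq : (q : ℂ) = k := mul_left_cancel₀ two_pi_I_ne_zero (by rw [hk, mul_comm])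
  simp [show q = k by exact_mod_cast hq]

lemma torsion_le_range_ratCircleExp : CommGroup.torsion ℂˣ ≤ ratCircleExp.range := by
  intro u hu
  have : NeZero (orderOf u) := ⟨(orderOf_pos_iff.mpr hu).ne'⟩
  obtain ⟨i, -, hi⟩ := (Complex.mem_rootsOfUnity (orderOf u) u).mp (pow_orderOf_eq_one u)
  refine ⟨.ofAdd ((i / orderOf u : ℚ) : AddCircle (1 : ℚ)), Units.ext ?_⟩
  rw [ratCircleExp_coe, ← hi]
  push_cast
  rfl

lemma torsion_units_le_range_algebraicClosure (K F : Type*) [Field K] [Field F] [Algebra K F] :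
    CommGroup.torsion Fˣ ≤ (Units.map (algebraicClosure K F).val.toMonoidHom).range := by
  intro u hu
  obtain ⟨m, hm, hpow⟩ := isOfFinOrder_iff_pow_eq_one.mp hu
  have hint : IsIntegral K (u : F) :=
    ⟨Polynomial.X ^ m - 1, Polynomial.monic_X_pow_sub_C 1 hm.ne',
      by simp [← Units.val_pow_eq_pow_val, hpow]⟩
  exact ⟨Units.mk0 ⟨u, mem_algebraicClosure_iff'.mpr hint⟩
    fun h ↦ u.ne_zero (congrArg Subtype.val h), Units.ext rfl⟩

theorem exists_injective_torsion_units_ratCircle (F : Type*) [Field F] [CharZero F] :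
    ∃ f : CommGroup.torsion Fˣ →* Multiplicative (AddCircle (1 : ℚ)), Injective f := by
  obtain ⟨ι, hι⟩ := exists_injective_torsion_of_le_range
    (Units.map_injective (algebraicClosure ℚ F).val.injective)
    (torsion_units_le_range_algebraicClosure ℚ F)
  -- instance search finds a `ℚ`-algebra structure on the intermediate field that is not the one
  -- `algebraicClosure.isAlgebraic` is stated for, hence the explicit instance
  let j : algebraicClosure ℚ F →+* ℂ :=
    @IsAlgClosed.lift ℂ _ _ ℚ _ _ (algebraicClosure ℚ F) _ _ _ _ _ _
      (algebraicClosure.isAlgebraic ℚ F)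
  let φ : CommGroup.torsion Fˣ →* ℂˣ := (Units.map j.toMonoidHom).comp ι
  have hφ : Injective φ := (Units.map_injective j.injective).comp hι
  obtain ⟨e, he⟩ :=
    exists_injective_torsion_of_le_range ratCircleExp_injective torsion_le_range_ratCircleExp
  exact ⟨e.comp (φ.codRestrict _ fun x ↦ φ.isOfFinOrder (CommMonoid.torsion.isMulTorsion x)),
    he.comp fun x y hxy ↦ hφ (congrArg Subtype.val hxy)⟩

namespace Module.End

variable {K V : Type*} [Field K] [AddCommGroup V] [Module K V]

lemma isSemisimple_of_isOfFinOrder [CharZero K] {f : End K V} (hf : IsOfFinOrder f) :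
    f.IsSemisimple := by
  obtain ⟨m, hm, hpow⟩ := isOfFinOrder_iff_pow_eq_one.mp hf
  have hsq : Squarefree (Polynomial.X ^ m - 1 : Polynomial K) :=
    (Polynomial.X_pow_sub_one_separable_iff.mpr (Nat.cast_ne_zero.mpr hm.ne')).squarefree
  exact isSemisimple_of_squarefree_aeval_eq_zero hsq (by simp [hpow])

lemma iSupIndep_iInf_eigenspace_of_commute {ι : Type*} (f : ι → End K V)
    (hf : ∀ i j, Commute (f i) (f j)) :
    iSupIndep fun χ : ι → K ↦ ⨅ i, (f i).eigenspace (χ i) :=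
  (independent_iInf_maxGenEigenspace_of_forall_mapsTo f
    fun i j _ ↦ mapsTo_maxGenEigenspace_of_comm (hf j i) _).mono
    fun _ ↦ iInf_mono fun _ ↦ eigenspace_le_maxGenEigenspace

lemma iSup_iInf_eigenspace_eq_top_of_commute [IsAlgClosed K] [FiniteDimensional K V]
    {ι : Type*} (f : ι → End K V) (hf : ∀ i j, Commute (f i) (f j))
    (hss : ∀ i, (f i).IsSemisimple) :
    ⨆ χ : ι → K, ⨅ i, (f i).eigenspace (χ i) = ⊤ := by
  simpa only [fun i ↦ (hss i).isFinitelySemisimple.maxGenEigenspace_eq_eigenspace] using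
    iSup_iInf_maxGenEigenspace_eq_top_of_iSup_maxGenEigenspace_eq_top_of_commute f
      (fun i j _ ↦ hf i j) fun i ↦ iSup_maxGenEigenspace_eq_top (f i)

lemma exists_monoidHom_of_iInf_eigenspace_ne_bot {G : Type*} [Monoid G] (ρ : G →* End K V)
    {χ : G → K} (hχ : ⨅ g, (ρ g).eigenspace (χ g) ≠ ⊥) : ∃ c : G →* K, ⇑c = χ := by
  obtain ⟨v, hv, hv0⟩ := Submodule.exists_mem_ne_zero_of_ne_bot hχ
  have hρv (g : G) : ρ g v = χ g • v :=
    mem_eigenspace_iff.mp ((Submodule.mem_iInf _).mp hv g)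
  have hcancel {a b : K} (h : a • v = b • v) : a = b := smul_left_injective K hv0 h
  refine ⟨{ toFun := χ, map_one' := hcancel ?_, map_mul' := fun a b ↦ hcancel ?_ }, rfl⟩
  · rw [← hρv, map_one, one_smul, one_apply]
  · rw [← hρv, map_mul, mul_apply, hρv, map_smul, hρv, smul_smul, mul_comm]

theorem exists_characters_forall_eq_one_imp_eq_one [IsAlgClosed K] [FiniteDimensional K V]
    {G : Type*} [CommMonoid G] (ρ : G →* End K V) (hρ : ∀ g, (ρ g).IsSemisimple)
    {ι : Type*} [Fintype ι] (hι : finrank K V ≤ Fintype.card ι) :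
    ∃ χ : ι → G →* K, ∀ g, (∀ i, χ i g = 1) → ρ g = 1 := by
  classical
  have hcomm (a b : G) : Commute (ρ a) (ρ b) := by
    simp only [Commute, SemiconjBy, ← map_mul, mul_comm a b]
  let W (χ : G → K) := ⨅ g, (ρ g).eigenspace (χ g)
  have hind : iSupIndep W := iSupIndep_iInf_eigenspace_of_commute ρ hcomm
  have : Fintype {χ // W χ ≠ ⊥} := hind.fintypeNeBotOfFiniteDimensional
  obtain ⟨e⟩ : Nonempty ({χ // W χ ≠ ⊥} ↪ ι) :=
    Embedding.nonempty_of_card_le (hind.subtype_ne_bot_le_finrank.trans hι)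
  choose c hc using fun s : {χ // W χ ≠ ⊥} ↦ exists_monoidHom_of_iInf_eigenspace_ne_bot ρ s.2
  -- indices not hit by `e` carry the trivial character
  refine ⟨extend e c 1, fun g hg ↦ ?_⟩
  have hW (χ : G → K) : W χ ≤ (ρ g).eigenspace 1 := by
    by_cases hχ : W χ = ⊥
    · simp [hχ]
    · have : χ g = 1 := by
        simpa [e.injective.extend_apply, hc] using hg (e ⟨χ, hχ⟩)
      exact this ▸ iInf_le _ g
  have htop : (ρ g).eigenspace 1 = ⊤ := top_unique <|
    (iSup_iInf_eigenspace_eq_top_of_commute ρ hcomm hρ).ge.trans (iSup_le hW)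
  ext1 v
  simpa using mem_eigenspace_iff.mp (htop ▸ Submodule.mem_top : v ∈ (ρ g).eigenspace 1)

end Module.End

theorem commutative_torsion_linear_group_embeds_in_QmodZ_pow_general
    {F : Type*} [Field F] [IsAlgClosed F] [CharZero F]
    (n : ℕ)
    (H : Subgroup (Matrix.GeneralLinearGroup (Fin n) F))
    (hcomm : ∀ a ∈ H, ∀ b ∈ H, a * b = b * a)
    (htors : ∀ x ∈ H, IsOfFinOrder x) :
    ∃ f : H →* Multiplicative (Fin n → AddCircle (1 : ℚ)),
      Function.Injective f := by
  let : CommGroup H := { H.toGroup with mul_comm := fun a b ↦ Subtype.ext (hcomm a a.2 b b.2) }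
  have hH (h : H) : IsOfFinOrder h := Submonoid.isOfFinOrder_coe.mp (htors h h.2)
  let ρ : H →* End F (Fin n → F) :=
    Matrix.toLinAlgEquiv'.toMonoidHom.comp ((Units.coeHom _).comp H.subtype)
  have hρ : Injective ρ := fun a b hab ↦
    Subtype.ext (Units.ext (Matrix.toLinAlgEquiv'.injective hab))
  obtain ⟨χ, hχ⟩ := End.exists_characters_forall_eq_one_imp_eq_one (ι := Fin n) ρ
    (fun h ↦ End.isSemisimple_of_isOfFinOrder (ρ.isOfFinOrder (hH h))) (by simp)
  let τ (i : Fin n) : H →* CommGroup.torsion Fˣ :=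
    (χ i).toHomUnits.codRestrict _ fun h ↦ (χ i).toHomUnits.isOfFinOrder (hH h)
  obtain ⟨ψ, hψ⟩ := exists_injective_torsion_units_ratCircle F
  refine ⟨(MulEquiv.piMultiplicative _).symm.toMonoidHom.comp
    (MonoidHom.pi fun i ↦ ψ.comp (τ i)), (injective_iff_map_eq_one _).mpr fun h hh ↦ ?_⟩
  have hψτ (i : Fin n) : ψ (τ i h) = ψ 1 := by
    simpa using congrFun ((MulEquiv.piMultiplicative _).symm.injective
      (hh.trans (map_one _).symm)) i
  refine hρ ((hχ h fun i ↦ ?_).trans (map_one ρ).symm)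
  exact congrArg (fun u : CommGroup.torsion Fˣ ↦ ((u : Fˣ) : F)) (hψ (hψτ i))

/-- Let `F` be an algebraically closed field of characteristic 0, `n`
a positive integer, and `H` a commutative torsion subgroup of `GL_n(F)`.  Then `H`
embeds into `(ℚ/ℤ)^n`: there is an injective group homomorphism `H → (ℚ/ℤ)^n`. -/
theorem commutative_torsion_linear_group_embeds_in_QmodZ_pow
    {F : Type*} [Field F] [IsAlgClosed F] [CharZero F]
    (n : ℕ) (hn : 0 < n)
    (H : Subgroup (Matrix.GeneralLinearGroup (Fin n) F))
    (hcomm : ∀ a ∈ H, ∀ b ∈ H, a * b = b * a)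
    (htors : ∀ x ∈ H, IsOfFinOrder x) :
    ∃ f : H →* Multiplicative (Fin n → AddCircle (1 : ℚ)),
      Function.Injective f :=
  commutative_torsion_linear_group_embeds_in_QmodZ_pow_general n H hcomm htors
end
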